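/- The reduced word 𝐢^A = (1,2,…,n)(1,2,…,n−1)⋯(1,2)(1) for the reversal w₀ in S_{n+1} is i-semi-adapted for every i ∈ {1,…,n}. -/

import Mathlib

open scoped Classical

noncomputable section

/-- Standard basis vector `e i` (1-based coordinates, ambient `ℤ^(n+1)` sits inside `ℕ → ℤ`). -/
def stdE (i : ℕ) : ℕ → ℤ := fun j => if j = i then 1 else 0

/-- Type `A_n` simple root `α_i = e_i - e_(i+1)`. -/
def alphaA (i : ℕ) : ℕ → ℤ := stdE i - stdE (i+1)

/-- Positive root `α_(i,j) = α_i + ⋯ + α_j = e_i - e_(j+1)`. -/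
def rootA (i j : ℕ) : ℕ → ℤ := stdE i - stdE (j+1)

/-- `β` is a positive root of type `A_n`. -/
def PosRootA (n : ℕ) (β : ℕ → ℤ) : Prop :=
  ∃ i j, 1 ≤ i ∧ i ≤ j ∧ j ≤ n ∧ β = rootA i j

/-- Simple transposition `s_i = (i, i+1)`. -/
def sA (i : ℕ) : Equiv.Perm ℕ := Equiv.swap i (i+1)

/-- Product `s_(i₁) ⋯ s_(i_N)` of the simple transpositions of a word. -/
def wordProdA (w : List ℕ) : Equiv.Perm ℕ := (w.map sA).prod

/-- The reversal permutation `w₀ : k ↦ n+2-k` of `{1,…,n+1}`. -/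
def w0A (n : ℕ) : Equiv.Perm ℕ :=
  Function.Involutive.toPerm (fun k => if 1 ≤ k ∧ k ≤ n+1 then n+2-k else k)
    (by intro k; dsimp only; split_ifs <;> omega)

/-- A permutation of coordinate indices acts on vectors by permuting coordinates. -/
def permAct (σ : Equiv.Perm ℕ) (v : ℕ → ℤ) : ℕ → ℤ := fun j => v (σ⁻¹ j)

/-- The induced root sequence `β_k = s_(i₁)⋯s_(i_(k-1)) (α_(i_k))` of a word (0-indexed). -/
def rootSeqA (w : List ℕ) : List (ℕ → ℤ) :=
  (List.range w.length).map fun k => permAct (wordProdA (w.take k)) (alphaA (w.getD k 0))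

/-- The word `𝐢^A = (1,2,…,n)(1,2,…,n-1)⋯(1,2)(1)`. -/
def wordA (n : ℕ) : List ℕ :=
  ((List.range n).reverse).flatMap fun m => (List.range (m+1)).map (· + 1)

/-- `w` is a reduced word for the longest element `w₀` of `S_(n+1)`. -/
def isReducedWordA (n : ℕ) (w : List ℕ) : Prop :=
  (∀ i ∈ w, 1 ≤ i ∧ i ≤ n) ∧ w.length = n * (n+1) / 2 ∧ wordProdA w = w0A n

/-- Standard inner product on `ℤ^(n+1)` (coordinates `1,…,n+1`; index `0` unused). -/
def ipA (n : ℕ) (v u : ℕ → ℤ) : ℤ := ∑ j ∈ Finset.range (n+2), v j * u j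

/-- A braid move: `two k` interchanges the letters at positions `k, k+1`;
`three k` replaces the letters `(a, b, a)` at positions `k, k+1, k+2` by `(b, a, b)`. -/
inductive BraidMove where
  | two (k : ℕ)
  | three (k : ℕ)

/-- The effect of a braid move on a word. -/
def moveWord (w : List ℕ) : BraidMove → List ℕ
  | .two k => (w.set k (w.getD (k+1) 0)).set (k+1) (w.getD k 0)
  | .three k => ((w.set k (w.getD (k+1) 0)).set (k+1) (w.getD k 0)).set (k+2) (w.getD (k+1) 0)

/-- Validity of a braid move on a word, in type `A`: a 2-term move needs letters at distance
`≥ 2`, a 3-term move needs the pattern `(a, b, a)` with `|a - b| = 1`. -/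
def moveOKA (w : List ℕ) : BraidMove → Prop
  | .two k => k + 1 < w.length ∧
      (w.getD k 0 + 2 ≤ w.getD (k+1) 0 ∨ w.getD (k+1) 0 + 2 ≤ w.getD k 0)
  | .three k => k + 2 < w.length ∧ w.getD (k+2) 0 = w.getD k 0 ∧
      (w.getD k 0 + 1 = w.getD (k+1) 0 ∨ w.getD (k+1) 0 + 1 = w.getD k 0)

/-- The semi-adaptedness condition for the letter `i`: any 3-term braid move must be applied
where the three consecutive induced roots are `(β, β + α_i, α_i)`. -/
def semiCondA (i : ℕ) (w : List ℕ) : BraidMove → Prop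
  | .two _ => True
  | .three k =>
      (rootSeqA w).getD (k+1) 0 = (rootSeqA w).getD k 0 + alphaA i ∧
      (rootSeqA w).getD (k+2) 0 = alphaA i

/-- Validity of a sequence of braid moves, each allowed by `i`-semi-adaptedness. -/
def validSeqA (i : ℕ) : List ℕ → List BraidMove → Prop
  | _, [] => True
  | w, m :: σ => moveOKA w m ∧ semiCondA i w m ∧ validSeqA i (moveWord w m) σ

/-- The word obtained by applying a sequence of braid moves. -/
def applyMovesWord (w : List ℕ) (σ : List BraidMove) : List ℕ := σ.foldl moveWord w

/-- `w` is `i`-semi-adapted: some sequence of braid moves allowed by `i`-semi-adaptedness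
takes `w` to a word whose first letter is `i`. -/
def SemiAdaptedA (i : ℕ) (w : List ℕ) : Prop :=
  ∃ σ : List BraidMove, validSeqA i w σ ∧ (applyMovesWord w σ).getD 0 0 = i

/-- The effect of a braid move on Lusztig data (tuples, recorded as lists of naturals):
a 2-term move keeps entries attached to their roots; a 3-term move applies Lusztig's
piecewise-linear map `(c₁,c₂,c₃) ↦ (max(c₂,c₁+c₂-c₃), min(c₁,c₃), max(c₂,c₂+c₃-c₁))`. -/
def moveData (c : List ℕ) : BraidMove → List ℕ
  | .two k => (c.set k (c.getD (k+1) 0)).set (k+1) (c.getD k 0)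
  | .three k =>
      ((c.set k (max (c.getD (k+1) 0) (c.getD k 0 + c.getD (k+1) 0 - c.getD (k+2) 0))).set
          (k+1) (min (c.getD k 0) (c.getD (k+2) 0))).set
          (k+2) (max (c.getD (k+1) 0) (c.getD (k+1) 0 + c.getD (k+2) 0 - c.getD k 0))

/-- The composite transition map `R_σ` on Lusztig data for a sequence `σ` of braid moves. -/
def Rdata (σ : List BraidMove) (c : List ℕ) : List ℕ := σ.foldl moveData c

/-- The inverse `R_σ⁻¹`: since each single-move transition map is an involution, the inverse
of `R_σ` applies the single-move maps in the reverse order. -/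
def RdataInv (σ : List BraidMove) (c : List ℕ) : List ℕ := σ.reverse.foldl moveData c

/-- One step of bracket cancellation, on labeled brackets (`true` = '(' , `false` = ')').
The state is `(labels of uncanceled ')', stack of currently open '(')`. -/
def brStep {α : Type*} (st : List α × List α) (x : Bool × α) : List α × List α :=
  match x with
  | (true, lab) => (st.1, lab :: st.2)
  | (false, lab) =>
    match st.2 with
    | [] => (lab :: st.1, [])
    | _ :: rest => (st.1, rest)

/-- Sequentially cancel adjacent `()` pairs in a labeled bracket string; returns the labels
of the uncanceled ')'s (head = rightmost) and of the uncanceled '('s (head = rightmost). -/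
def brReduce {α : Type*} (l : List (Bool × α)) : List α × List α := l.foldl brStep ([], [])

/-- The label of the leftmost uncanceled '(' in a labeled bracket string, if any. -/
def brLeftOpen {α : Type*} (l : List (Bool × α)) : Option α := (brReduce l).2.getLast?

/-- The label of the rightmost uncanceled ')' in a labeled bracket string, if any. -/
def brRightClose {α : Type*} (l : List (Bool × α)) : Option α := (brReduce l).1.head?

/-- The roots `η₁, …, η_k`: those prior to `α_i` in the induced order of `w` with
`(α_i | η) < 0`, in order (as a 0-indexed list). -/
def etaListA (n i : ℕ) (w : List ℕ) : List (ℕ → ℤ) :=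
  ((rootSeqA w).takeWhile fun β => decide (β ≠ alphaA i)).filter
    fun η => decide (ipA n (alphaA i) η < 0)

/-- The bracket string `S_i^𝐢(𝐜)`: for each `j`, `c_(ν_(j+1))` ')'s labeled `j` followed by
`c_(η_(j+1))` '('s labeled `j`, and finally `c_(α_i)` ')'s labeled `k`. Here `ν = η + α_i`. -/
def brStringA (n i : ℕ) (w : List ℕ) (c : (ℕ → ℤ) → ℕ) : List (Bool × ℕ) :=
  ((List.range (etaListA n i w).length).flatMap fun j =>
    List.replicate (c ((etaListA n i w).getD j 0 + alphaA i)) (false, j) ++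
    List.replicate (c ((etaListA n i w).getD j 0)) (true, j)) ++
  List.replicate (c (alphaA i)) (false, (etaListA n i w).length)

/-- Lusztig data of a Kostant partition `𝐜` with respect to the word `w`: the values of `𝐜`
read along the induced root order of `w`. -/
def lusDataA (w : List ℕ) (c : (ℕ → ℤ) → ℕ) : List ℕ := (rootSeqA w).map c

/-- Add `1` to the entry in position 1 of a Lusztig datum. -/
def inc1 (c : List ℕ) : List ℕ := c.set 0 (c.getD 0 0 + 1)

/-- Subtract `1` from the entry in position 1 of a Lusztig datum. -/
def dec1 (c : List ℕ) : List ℕ := c.set 0 (c.getD 0 0 - 1)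

/-!
Induction on `n`, using `𝐢^A_(n+1) = (1,…,n+1) 𝐢^A_n`. For `i = 1` there is nothing to do.
For `i ≥ 2`, the block `p = (1,…,n+1)` acts by `s_1 ⋯ s_(n+1)`, which sends `α_(i-1)` to `α_i`,
so the moves making `𝐢^A_n` start with `i-1` can be performed behind `p` and are
`i`-semi-adapted there. This gives `(1,…,n+1)(i-1)⋯`; commute `i-1` leftwards past
`n+1,…,i+1`, apply the 3-term move `(i-1, i, i-1) ↦ (i, i-1, i)`, whose induced roots are
`(e_1 - e_i, e_1 - e_(i+1), α_i)`, and commute `i` leftwards past `i-2,…,1`.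
-/

lemma permAct_mul (σ τ : Equiv.Perm ℕ) (v : ℕ → ℤ) :
    permAct (σ * τ) v = permAct σ (permAct τ v) := by
  funext j; simp [permAct, mul_inv_rev, Equiv.Perm.mul_apply]

lemma permAct_stdE (σ : Equiv.Perm ℕ) (j : ℕ) : permAct σ (stdE j) = stdE (σ j) := by
  funext m
  simp [permAct, stdE, Equiv.symm_apply_eq]

lemma permAct_alphaA (σ : Equiv.Perm ℕ) (a : ℕ) :
    permAct σ (alphaA a) = stdE (σ a) - stdE (σ (a+1)) := by
  rw [alphaA, ← permAct_stdE, ← permAct_stdE]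
  rfl

lemma wordProdA_append (u v : List ℕ) : wordProdA (u ++ v) = wordProdA u * wordProdA v := by
  simp [wordProdA]

lemma length_rootSeqA (w : List ℕ) : (rootSeqA w).length = w.length := by
  simp [rootSeqA]

lemma rootSeqA_getD {w : List ℕ} {k : ℕ} (hk : k < w.length) :
    (rootSeqA w).getD k 0 = permAct (wordProdA (w.take k)) (alphaA (w.getD k 0)) := by
  rw [rootSeqA, List.getD_eq_getElem _ _ (by simpa using hk)]
  simp

lemma getD_append_length_add {α : Type*} (p w : List α) (k : ℕ) (d : α) :
    (p ++ w).getD (p.length + k) d = w.getD k d := by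
  rw [List.getD_append_right _ _ _ _ (by omega), Nat.add_sub_cancel_left]

lemma set_append_length_add {α : Type*} (p w : List α) (k : ℕ) (a : α) :
    (p ++ w).set (p.length + k) a = p ++ w.set k a := by
  rw [List.set_append_right _ _ (by omega), Nat.add_sub_cancel_left]

lemma rootSeqA_append_getD (p w : List ℕ) (k : ℕ) :
    (rootSeqA (p ++ w)).getD (p.length + k) 0
      = permAct (wordProdA p) ((rootSeqA w).getD k 0) := by
  by_cases hk : k < w.length
  · rw [rootSeqA_getD (by simp; omega), rootSeqA_getD hk, List.take_append,
      List.take_of_length_le (by omega), Nat.add_sub_cancel_left, wordProdA_append,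
      permAct_mul, getD_append_length_add]
  · rw [List.getD_eq_default _ _ (by simp [length_rootSeqA]; omega),
      List.getD_eq_default _ _ (by simp [length_rootSeqA]; omega)]
    rfl

def blockA (L : ℕ) : List ℕ := (List.range L).map (· + 1)

lemma blockA_succ (L : ℕ) : blockA (L+1) = blockA L ++ [L+1] := by
  simp [blockA, List.range_succ]

lemma blockA_add (a b : ℕ) : blockA (a + b) = blockA a ++ (List.range b).map (a + · + 1) := by
  simp [blockA, List.range_add, Function.comp_def]

lemma wordA_succ (n : ℕ) : wordA (n+1) = blockA (n+1) ++ wordA n := by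
  simp [wordA, blockA, List.range_succ]

lemma wordProdA_blockA_apply (q : ℕ) {j : ℕ} (hj : 1 ≤ j) :
    wordProdA (blockA q) j = if j ≤ q then j + 1 else if j = q + 1 then 1 else j := by
  induction q generalizing j with
  | zero =>
    simp only [blockA, List.range_zero, List.map_nil, wordProdA, List.prod_nil,
      Equiv.Perm.one_apply]
    split_ifs <;> omega
  | succ q ih =>
    rw [blockA_succ, wordProdA_append, Equiv.Perm.mul_apply]
    change wordProdA (blockA q) (Equiv.swap (q+1) (q+2) j) = _
    rcases eq_or_ne j (q+1) with rfl | h1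
    · rw [Equiv.swap_apply_left, ih (by omega)]
      split_ifs <;> omega
    rcases eq_or_ne j (q+2) with rfl | h2
    · rw [Equiv.swap_apply_right, ih (by omega)]
      split_ifs <;> omega
    · rw [Equiv.swap_apply_of_ne_of_ne h1 h2, ih hj]
      split_ifs <;> omega

lemma permAct_blockA_alphaA_of_lt {q k : ℕ} (hk : 1 ≤ k) (hkq : k < q) :
    permAct (wordProdA (blockA q)) (alphaA k) = alphaA (k+1) := by
  rw [permAct_alphaA, wordProdA_blockA_apply q hk, wordProdA_blockA_apply q (by omega),
    if_pos (by omega), if_pos (by omega), alphaA]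

lemma permAct_blockA_alphaA_of_gt {q k : ℕ} (hqk : q + 1 < k) :
    permAct (wordProdA (blockA q)) (alphaA k) = alphaA k := by
  rw [permAct_alphaA, wordProdA_blockA_apply q (by omega), wordProdA_blockA_apply q (by omega),
    if_neg (by omega), if_neg (by omega), if_neg (by omega), if_neg (by omega), alphaA]

def shiftMove (L : ℕ) : BraidMove → BraidMove
  | .two k => .two (L + k)
  | .three k => .three (L + k)

lemma moveWord_append_shiftMove (p w : List ℕ) (m : BraidMove) :
    moveWord (p ++ w) (shiftMove p.length m) = p ++ moveWord w m := by
  cases m with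
  | two k =>
    change ((p ++ w).set (p.length + k) ((p ++ w).getD (p.length + (k+1)) 0)).set
        (p.length + (k+1)) ((p ++ w).getD (p.length + k) 0) = _
    rw [getD_append_length_add, getD_append_length_add, set_append_length_add,
      set_append_length_add]
    rfl
  | three k =>
    change (((p ++ w).set (p.length + k) ((p ++ w).getD (p.length + (k+1)) 0)).set
        (p.length + (k+1)) ((p ++ w).getD (p.length + k) 0)).set
        (p.length + (k+2)) ((p ++ w).getD (p.length + (k+1)) 0) = _
    rw [getD_append_length_add, getD_append_length_add, set_append_length_add,
      set_append_length_add, set_append_length_add]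
    rfl

lemma moveOKA_append_shiftMove {p w : List ℕ} {m : BraidMove} (h : moveOKA w m) :
    moveOKA (p ++ w) (shiftMove p.length m) := by
  cases m with
  | two k =>
    obtain ⟨hlen, hdist⟩ := h
    refine ⟨by simp; omega, ?_⟩
    change (p ++ w).getD (p.length + k) 0 + 2 ≤ (p ++ w).getD (p.length + (k+1)) 0 ∨
      (p ++ w).getD (p.length + (k+1)) 0 + 2 ≤ (p ++ w).getD (p.length + k) 0
    simpa only [getD_append_length_add] using hdist
  | three k =>
    obtain ⟨hlen, hpat⟩ := h
    refine ⟨by simp; omega, ?_⟩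
    change (p ++ w).getD (p.length + (k+2)) 0 = (p ++ w).getD (p.length + k) 0 ∧
      ((p ++ w).getD (p.length + k) 0 + 1 = (p ++ w).getD (p.length + (k+1)) 0 ∨
        (p ++ w).getD (p.length + (k+1)) 0 + 1 = (p ++ w).getD (p.length + k) 0)
    simpa only [getD_append_length_add] using hpat

lemma semiCondA_append_shiftMove {i i' : ℕ} {p w : List ℕ} {m : BraidMove}
    (hp : permAct (wordProdA p) (alphaA i') = alphaA i) (h : semiCondA i' w m) :
    semiCondA i (p ++ w) (shiftMove p.length m) := by
  cases m with
  | two k => trivial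
  | three k =>
    obtain ⟨h1, h2⟩ := h
    change (rootSeqA (p ++ w)).getD (p.length + (k+1)) 0
        = (rootSeqA (p ++ w)).getD (p.length + k) 0 + alphaA i ∧
      (rootSeqA (p ++ w)).getD (p.length + (k+2)) 0 = alphaA i
    rw [rootSeqA_append_getD, rootSeqA_append_getD, rootSeqA_append_getD, h1, h2, ← hp]
    exact ⟨rfl, rfl⟩

def ReachesA (i : ℕ) (w w' : List ℕ) : Prop :=
  ∃ σ : List BraidMove, validSeqA i w σ ∧ applyMovesWord w σ = w'

namespace ReachesA

lemma refl (i : ℕ) (w : List ℕ) : ReachesA i w w := ⟨[], trivial, rfl⟩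

lemma trans {i : ℕ} {u v w : List ℕ} (huv : ReachesA i u v) (hvw : ReachesA i v w) :
    ReachesA i u w := by
  obtain ⟨σ, hσ, rfl⟩ := huv
  obtain ⟨τ, hτ, rfl⟩ := hvw
  refine ⟨σ ++ τ, ?_, List.foldl_append⟩
  induction σ generalizing u with
  | nil => exact hτ
  | cons m σ ih => exact ⟨hσ.1, hσ.2.1, ih hσ.2.2 hτ⟩

lemma of_move {i : ℕ} {w : List ℕ} {m : BraidMove} (hm : moveOKA w m) (hc : semiCondA i w m) :
    ReachesA i w (moveWord w m) :=
  ⟨[m], ⟨hm, hc, trivial⟩, rfl⟩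

lemma append_left {i i' : ℕ} {w w' : List ℕ} (h : ReachesA i' w w') (p : List ℕ)
    (hp : permAct (wordProdA p) (alphaA i') = alphaA i) :
    ReachesA i (p ++ w) (p ++ w') := by
  obtain ⟨σ, hσ, rfl⟩ := h
  refine ⟨σ.map (shiftMove p.length), ?_, ?_⟩
  · induction σ generalizing w with
    | nil => trivial
    | cons m σ ih =>
      refine ⟨moveOKA_append_shiftMove hσ.1, semiCondA_append_shiftMove hp hσ.2.1, ?_⟩
      rw [moveWord_append_shiftMove]
      exact ih hσ.2.2
  · clear hσ
    induction σ generalizing w with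
    | nil => rfl
    | cons m σ ih =>
      change applyMovesWord (moveWord (p ++ w) (shiftMove p.length m)) _ = _
      rw [moveWord_append_shiftMove]
      exact ih

end ReachesA

lemma reachesA_commute_left (i a : ℕ) (s : List ℕ) :
    ∀ (p u : List ℕ), (∀ b ∈ u, a + 2 ≤ b ∨ b + 2 ≤ a) →
      ReachesA i (p ++ u ++ a :: s) (p ++ a :: (u ++ s))
  | _, [], _ => by simpa using ReachesA.refl i _
  | p, b :: u, hu => by
    have hrest := reachesA_commute_left i a s (p ++ [b]) u
      (fun c hc => hu c (List.mem_cons_of_mem b hc))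
    simp only [List.append_assoc, List.cons_append, List.nil_append] at hrest ⊢
    refine hrest.trans ?_
    have hswap := ReachesA.of_move (i := i) (w := p ++ b :: a :: (u ++ s))
      (m := shiftMove p.length (.two 0))
      (moveOKA_append_shiftMove ⟨by simp, by have := hu b (by simp); simp; omega⟩) trivial
    rwa [moveWord_append_shiftMove] at hswap

lemma reachesA_braid_three (a : ℕ) (s : List ℕ) :
    ReachesA (a+1) (a :: (a+1) :: a :: s) ((a+1) :: a :: (a+1) :: s) := by
  set w := a :: (a+1) :: a :: s
  have hswap₁ : Equiv.swap a (a+1) (a+2) = a+2 :=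
    Equiv.swap_apply_of_ne_of_ne (by omega) (by omega)
  have hswap₂ : Equiv.swap (a+1) (a+2) a = a :=
    Equiv.swap_apply_of_ne_of_ne (by omega) (by omega)
  have hβ₀ : (rootSeqA w).getD 0 0 = stdE a - stdE (a+1) := by
    rw [rootSeqA_getD (by simp [w])]
    simp [w, wordProdA, permAct_alphaA]
  have hβ₁ : (rootSeqA w).getD 1 0 = stdE a - stdE (a+2) := by
    rw [rootSeqA_getD (by simp [w])]
    simp [w, wordProdA, sA, permAct_alphaA, hswap₁]
  have hβ₂ : (rootSeqA w).getD 2 0 = stdE (a+1) - stdE (a+2) := by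
    rw [rootSeqA_getD (by simp [w])]
    simp [w, wordProdA, sA, permAct_alphaA, hswap₁, hswap₂]
  refine ReachesA.of_move (m := .three 0) ⟨by simp [w], rfl, Or.inl rfl⟩ ⟨?_, ?_⟩
  · change (rootSeqA w).getD 1 0 = (rootSeqA w).getD 0 0 + alphaA (a+1)
    rw [hβ₀, hβ₁, alphaA]
    abel
  · exact hβ₂

lemma reachesA_wordA_head {n i : ℕ} (hi1 : 1 ≤ i) (hin : i ≤ n) :
    ∃ t, ReachesA i (wordA n) (i :: t) := by
  induction n generalizing i with
  | zero => omega
  | succ N ih =>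
    obtain rfl | ⟨j, rfl⟩ : i = 1 ∨ ∃ j, i = j + 2 := by
      rcases Nat.lt_or_ge i 2 with h | h
      · left; omega
      · right; exact ⟨i - 2, by omega⟩
    · exact ⟨_, by rw [wordA_succ, Nat.add_comm, blockA_add]; exact ReachesA.refl _ _⟩
    obtain ⟨t, ht⟩ := ih (i := j+1) (by omega) (by omega)
    set u := (List.range (N - (j+1))).map (j + 2 + · + 1)
    have hblock : blockA (N+1) = blockA j ++ [j+1, j+2] ++ u := by
      rw [show N + 1 = j + 2 + (N - (j+1)) by omega, blockA_add, blockA_succ, blockA_succ]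
      simp [u]
    have hu : ∀ b ∈ u, j + 1 + 2 ≤ b ∨ b + 2 ≤ j + 1 := by
      intro b hb
      simp only [u, List.mem_map] at hb
      omega
    have hblock_j : ∀ b ∈ blockA j, j + 2 + 2 ≤ b ∨ b + 2 ≤ j + 2 := by
      intro b hb
      simp only [blockA, List.mem_map, List.mem_range] at hb
      omega
    have hlift : ReachesA (j+2) (wordA (N+1)) (blockA (N+1) ++ (j+1) :: t) := by
      rw [wordA_succ]
      exact ht.append_left _ (permAct_blockA_alphaA_of_lt (by omega) (by omega))
    have hcommute₁ := reachesA_commute_left (j+2) (j+1) t (blockA j ++ [j+1, j+2]) u hu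
    have hbraid := (reachesA_braid_three (j+1) (u ++ t)).append_left (blockA j)
      (permAct_blockA_alphaA_of_gt (by omega))
    have hcommute₂ := reachesA_commute_left (j+2) (j+2) ((j+1) :: (j+2) :: (u ++ t)) []
      (blockA j) hblock_j
    refine ⟨blockA j ++ (j+1) :: (j+2) :: (u ++ t), hlift.trans ?_⟩
    rw [hblock]
    simp only [List.append_assoc, List.cons_append, List.nil_append] at hcommute₁ hcommute₂ ⊢
    exact hcommute₁.trans (hbraid.trans hcommute₂)

theorem statement10_general (n : ℕ) (i : ℕ) (hi1 : 1 ≤ i) (hi2 : i ≤ n) :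
    SemiAdaptedA i (wordA n) := by
  obtain ⟨t, σ, hσ, hσt⟩ := reachesA_wordA_head hi1 hi2
  exact ⟨σ, hσ, by rw [hσt]; rfl⟩

/-- The reduced word `𝐢^A = (1,2,…,n)(1,2,…,n-1)⋯(1,2)(1)` for the reversal
`w₀` in `S_(n+1)` is `i`-semi-adapted for every `i ∈ {1,…,n}`. -/
theorem statement10 (n : ℕ) (hn : 1 ≤ n) (i : ℕ) (hi1 : 1 ≤ i) (hi2 : i ≤ n) :
    SemiAdaptedA i (wordA n) :=
  statement10_general n i hi1 hi2

end
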